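/- Let h₁ and h₂ be convex, nonnegative, differentiable real-valued functions on ℝ. Define g(x₁,x₂) = h₁(x₁)·h₂(x₂) and, for fixed points y₁, y₂, define ĝ(x₁,x₂;y₁,y₂) = (1/2)(h₁(x₁)+h₂(x₂))² − (1/2)(h₁(y₁)+h₂(y₂))² − h₁'(y₁)h₁(y₁)(x₁−y₁) − h₂'(y₂)h₂(y₂)(x₂−y₂). Then ĝ(x₁,x₂;y₁,y₂) ≥ g(x₁,x₂) − g(y₁,y₂) for all x₁,x₂, with equality when (x₁,x₂)=(y₁,y₂). -/
import Mathlib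

lemma tangent_le (h : ℝ → ℝ) (hc : ConvexOn ℝ Set.univ h) (hd : Differentiable ℝ h)
    (y x : ℝ) : h y + deriv h y * (x - y) ≤ h x := by
  rcases lt_trichotomy x y with hxy | rfl | hxy
  · have hs := hc.slope_le_deriv (Set.mem_univ x) (Set.mem_univ y) hxy (hd y)
    rw [slope_def_field] at hs
    have hp : 0 < y - x := by linarith
    rw [div_le_iff₀ hp] at hs
    nlinarith
  · simp
  · have hs := hc.deriv_le_slope (Set.mem_univ y) (Set.mem_univ x) hxy (hd y)
    rw [slope_def_field] at hs
    have hp : 0 < x - y := by linarith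
    rw [le_div_iff₀ hp] at hs
    nlinarith

lemma half_sq_tangent (h : ℝ → ℝ) (hc : ConvexOn ℝ Set.univ h) (hn : ∀ x, 0 ≤ h x)
    (hd : Differentiable ℝ h) (y x : ℝ) :
    h y ^ 2 + 2 * (deriv h y * h y * (x - y)) ≤ h x ^ 2 := by
  have ht := tangent_le h hc hd y x
  rcases le_or_gt 0 (h y + deriv h y * (x - y)) with h0 | h0
  · have hsq : (h y + deriv h y * (x - y)) ^ 2 ≤ h x ^ 2 := by
      apply pow_le_pow_left₀ h0 ht
    nlinarith [sq_nonneg (deriv h y * (x - y))]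
  · nlinarith [sq_nonneg (h x), hn y, hn x]

theorem cccp_locally_tight_upper_bound
    (h₁ h₂ : ℝ → ℝ)
    (hc₁ : ConvexOn ℝ Set.univ h₁) (hc₂ : ConvexOn ℝ Set.univ h₂)
    (hn₁ : ∀ x, 0 ≤ h₁ x) (hn₂ : ∀ x, 0 ≤ h₂ x)
    (hd₁ : Differentiable ℝ h₁) (hd₂ : Differentiable ℝ h₂)
    (y₁ y₂ : ℝ)
    (g : ℝ → ℝ → ℝ) (hg : ∀ x₁ x₂, g x₁ x₂ = h₁ x₁ * h₂ x₂)
    (ghat : ℝ → ℝ → ℝ)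
    (hghat : ∀ x₁ x₂, ghat x₁ x₂ =
      (1 / 2) * (h₁ x₁ + h₂ x₂) ^ 2 - (1 / 2) * (h₁ y₁ + h₂ y₂) ^ 2
        - deriv h₁ y₁ * h₁ y₁ * (x₁ - y₁) - deriv h₂ y₂ * h₂ y₂ * (x₂ - y₂)) :
    (∀ x₁ x₂, g x₁ x₂ - g y₁ y₂ ≤ ghat x₁ x₂) ∧ ghat y₁ y₂ = g y₁ y₂ - g y₁ y₂ := by
  constructor
  · intro x₁ x₂
    have t1 := half_sq_tangent h₁ hc₁ hn₁ hd₁ y₁ x₁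
    have t2 := half_sq_tangent h₂ hc₂ hn₂ hd₂ y₂ x₂
    rw [hg, hg, hghat]
    nlinarith [t1, t2]
  · rw [hghat, hg]; ring
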